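/- Let Φ be a real n×m matrix and let σ > 0 satisfy σ‖v‖₂ ≤ ‖Φv‖₂ for all v ∈ ℝ^m. Suppose y = Φx + ε. Then for any index i with x_i ≠ 0 and any index set A ⊆ {1,…,m}: (min over z with supp(z) ⊆ A \ {i} of ‖y − Φz‖₂) ≥ σ·|x_i| − ‖ε‖₂. -/

import Mathlib

open Matrix

/-- The Euclidean (ℓ₂) norm of a finitely indexed real vector. -/
noncomputable def l2norm {ι : Type*} [Fintype ι] (v : ι → ℝ) : ℝ :=
  ‖(WithLp.equiv 2 (ι → ℝ)).symm v‖

/-- The restricted least-squares residual norm: the infimum of `‖y − Φz‖₂` over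
vectors `z` supported inside the index set `B`. -/
noncomputable def resNorm {n m : ℕ} (Φ : Matrix (Fin n) (Fin m) ℝ)
    (y : Fin n → ℝ) (B : Finset (Fin m)) : ℝ :=
  sInf {c : ℝ | ∃ z : Fin m → ℝ, (∀ l, z l ≠ 0 → l ∈ B) ∧ c = l2norm (y - Φ.mulVec z)}

/-
If `z` avoids the atom `i`, then `y - Φz = Φ(x - z) + ε` and `(x - z)_i = x_i`, so the triangle
inequality and the lower singular-value bound give
`‖y - Φz‖₂ ≥ ‖Φ(x - z)‖₂ - ‖ε‖₂ ≥ σ‖x - z‖₂ - ‖ε‖₂ ≥ σ|x_i| - ‖ε‖₂`.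
-/

section L2Norm

variable {ι : Type*} [Fintype ι]

theorem abs_apply_le_l2norm (v : ι → ℝ) (i : ι) : |v i| ≤ l2norm v :=
  PiLp.norm_apply_le ((WithLp.equiv 2 (ι → ℝ)).symm v) i

theorem l2norm_sub_le (v w : ι → ℝ) : l2norm (v - w) ≤ l2norm v + l2norm w :=
  norm_sub_le ((WithLp.equiv 2 (ι → ℝ)).symm v) ((WithLp.equiv 2 (ι → ℝ)).symm w)

end L2Norm

theorem le_resNorm {n m : ℕ} {Φ : Matrix (Fin n) (Fin m) ℝ} {y : Fin n → ℝ}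
    {B : Finset (Fin m)} {c : ℝ}
    (h : ∀ z : Fin m → ℝ, (∀ l, z l ≠ 0 → l ∈ B) → c ≤ l2norm (y - Φ *ᵥ z)) :
    c ≤ resNorm Φ y B := by
  refine le_csInf ⟨_, 0, fun l hl => absurd rfl hl, rfl⟩ ?_
  rintro _ ⟨z, hz, rfl⟩
  exact h z hz

theorem mul_abs_apply_le_l2norm_mulVec {n m : ℕ} {Φ : Matrix (Fin n) (Fin m) ℝ} {σ : ℝ}
    (hσ : 0 ≤ σ) (hlow : ∀ v : Fin m → ℝ, σ * l2norm v ≤ l2norm (Φ *ᵥ v))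
    (v : Fin m → ℝ) (i : Fin m) : σ * |v i| ≤ l2norm (Φ *ᵥ v) :=
  (mul_le_mul_of_nonneg_left (abs_apply_le_l2norm v i) hσ).trans (hlow v)

theorem residual_lower_bound_after_deleting_true_atom_general {n m : ℕ}
    (Φ : Matrix (Fin n) (Fin m) ℝ)
    (σ : ℝ) (hσ : 0 < σ)
    (hlow : ∀ v : Fin m → ℝ, σ * l2norm v ≤ l2norm (Φ.mulVec v))
    (x : Fin m → ℝ) (ε : Fin n → ℝ) (y : Fin n → ℝ)
    (hy : y = Φ.mulVec x + ε)
    (i : Fin m) (A : Finset (Fin m)) :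
    σ * |x i| - l2norm ε ≤ resNorm Φ y (A.erase i) := by
  refine le_resNorm fun z hz => ?_
  have hzi : z i = 0 := by
    by_contra h
    exact Finset.notMem_erase i A (hz i h)
  have hsplit : Φ *ᵥ (x - z) = (y - Φ *ᵥ z) - ε := by
    rw [hy, mulVec_sub]
    abel
  calc σ * |x i| - l2norm ε = σ * |(x - z) i| - l2norm ε := by simp [hzi]
    _ ≤ l2norm (Φ *ᵥ (x - z)) - l2norm ε := by
      gcongr
      exact mul_abs_apply_le_l2norm_mulVec hσ.le hlow _ i
    _ ≤ l2norm (y - Φ *ᵥ z) := by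
      rw [hsplit]
      linarith [l2norm_sub_le (y - Φ *ᵥ z) ε]

/-- if `σ > 0` is a lower singular-value bound for `Φ` and `y = Φx + ε`,
then for any index `i` with `x i ≠ 0` and any active set `A`, the residual of the
least-squares problem restricted to `A \ {i}` is at least `σ·|x i| − ‖ε‖₂`. -/
theorem residual_lower_bound_after_deleting_true_atom {n m : ℕ}
    (Φ : Matrix (Fin n) (Fin m) ℝ)
    (σ : ℝ) (hσ : 0 < σ)
    (hlow : ∀ v : Fin m → ℝ, σ * l2norm v ≤ l2norm (Φ.mulVec v))
    (x : Fin m → ℝ) (ε : Fin n → ℝ) (y : Fin n → ℝ)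
    (hy : y = Φ.mulVec x + ε)
    (i : Fin m) (hxi : x i ≠ 0) (A : Finset (Fin m)) :
    σ * |x i| - l2norm ε ≤ resNorm Φ y (A.erase i) :=
  residual_lower_bound_after_deleting_true_atom_general Φ σ hσ hlow x ε y hy i A
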